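/- Every globally BH-rejected p-value is selected by its chunk: with r_C the global BH index and r*_{C_i} the chunk-level index of chunk C_i, every p ∈ C_i with p < r_C·α/m also satisfies p < (r*_{C_i} + m − m_i)·α/m; hence the global BH rejection set is contained in the union over chunks of the chunk-selected sets {p ∈ C_i : p < (r*_{C_i} + m − m_i)·α/m}. -/

import Mathlib

open scoped Classical

/-- `#S(t)`: the number of elements of the multiset `C` that are strictly less than `t`. -/
noncomputable def countBelow (C : Multiset ℝ) (t : ℝ) : ℕ :=
  (C.filter (fun p => p < t)).card

/-- The `k`-th smallest element (1-indexed order statistic, with multiplicity) of `D`. -/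
noncomputable def orderStat (D : Multiset ℝ) (k : ℕ) : ℝ :=
  (D.sort (· ≤ ·)).getD (k - 1) 0

/-- The Benjamini–Hochberg index at level `α`:
`max {i ∈ {1,…,m} : p_(i) < i·α/m}`, with value `0` if this set is empty. -/
noncomputable def rBH (α : ℝ) (C : Multiset ℝ) : ℕ :=
  ((Finset.Icc 1 C.card).filter
    (fun i => orderStat C i < (i : ℝ) * α / (C.card : ℝ))).sup id

/-- The chunk-level BH index of the chunk `D` inside a total problem of `m` p-values:
`max {r ∈ {1,…,|D|} : p_(r:D) < (r + m − |D|)·α/m}`, with value `0` if this set is empty. -/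
noncomputable def rStarChunk (α : ℝ) (m : ℕ) (D : Multiset ℝ) : ℕ :=
  ((Finset.Icc 1 D.card).filter
    (fun r => orderStat D r < ((r + m - D.card : ℕ) : ℝ) * α / (m : ℝ))).sup id


/-!
Put `t = r_C·α/m` and let `k` be the number of p-values of the chunk `C_i` below `t`.
Since `p_(r_C:C) < t`, at least `r_C` p-values of `C` lie below `t`, and at most `m − m_i` of
them lie outside `C_i`, so `r_C ≤ k + m − m_i`. In a sorted list the entries below `t` form an
initial segment, so `p_(k:C_i) < t ≤ (k + m − m_i)·α/m`: the index `k` is admissible for the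
chunk, hence `k ≤ r*_{C_i}` and `t ≤ (r*_{C_i} + m − m_i)·α/m`.
-/

theorem List.Pairwise.getElem_lt_iff_lt_countP {α : Type*} [LinearOrder α] {l : List α}
    (hl : l.Pairwise (· ≤ ·)) (t : α) {i : ℕ} (hi : i < l.length) :
    l[i] < t ↔ i < l.countP (· < t) := by
  induction l generalizing i with
  | nil => simp at hi
  | cons a l ih =>
    rw [List.pairwise_cons] at hl
    by_cases ha : a < t
    · cases i with
      | zero => simp [ha]
      | succ i => simp [ha, ih hl.2 (by simpa using hi)]
    · have hnone : l.countP (· < t) = 0 :=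
        List.countP_eq_zero.2 fun x hx => by simpa using (not_lt.1 ha).trans (hl.1 x hx)
      have hge : t ≤ (a :: l)[i] := by
        cases i with
        | zero => exact not_lt.1 ha
        | succ i => exact (not_lt.1 ha).trans (hl.1 _ (List.getElem_mem _))
      simp [ha, hnone, not_lt.2 hge]

theorem Multiset.filter_finset_sum {ι α : Type*} (p : α → Prop) [DecidablePred p]
    (s : Finset ι) (f : ι → Multiset α) :
    (∑ i ∈ s, f i).filter p = ∑ i ∈ s, (f i).filter p :=
  map_sum (⟨⟨Multiset.filter p, Multiset.filter_zero p⟩, Multiset.filter_add p⟩ :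
    Multiset α →+ Multiset α) f s

theorem countBelow_add (C D : Multiset ℝ) (t : ℝ) :
    countBelow (C + D) t = countBelow C t + countBelow D t := by
  simp only [countBelow, Multiset.filter_add, Multiset.card_add]

theorem countBelow_le_card (D : Multiset ℝ) (t : ℝ) : countBelow D t ≤ D.card :=
  Multiset.card_le_card (Multiset.filter_le _ _)

theorem countBelow_le_of_le {C D : Multiset ℝ} (hDC : D ≤ C) (t : ℝ) :
    countBelow C t ≤ countBelow D t + (C.card - D.card) := by
  obtain ⟨E, rfl⟩ := Multiset.le_iff_exists_add.1 hDC
  have := countBelow_le_card E t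
  rw [countBelow_add, Multiset.card_add]
  omega

theorem orderStat_succ_lt_iff {D : Multiset ℝ} {t : ℝ} {i : ℕ} (hi : i < D.card) :
    orderStat D (i + 1) < t ↔ i < countBelow D t := by
  have hcount : countBelow D t = (D.sort (· ≤ ·)).countP (· < t) := by
    rw [countBelow, ← Multiset.countP_eq_card_filter, ← Multiset.coe_countP,
      Multiset.sort_eq]
  rw [hcount, orderStat, Nat.add_sub_cancel,
    List.getD_eq_getElem _ _ (by simpa using hi)]
  exact (Multiset.pairwise_sort D _).getElem_lt_iff_lt_countP t _

theorem rBH_le_countBelow (α : ℝ) (C : Multiset ℝ) :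
    rBH α C ≤ countBelow C ((rBH α C : ℝ) * α / C.card) := by
  set S := (Finset.Icc 1 C.card).filter
    (fun i => orderStat C i < (i : ℝ) * α / (C.card : ℝ))
  rcases S.eq_empty_or_nonempty with hS | hS
  · simp [rBH, S, hS]
  obtain ⟨r, hr, hsup⟩ := Finset.exists_mem_eq_sup S hS id
  have hrBH : rBH α C = r := hsup
  rw [hrBH]
  obtain ⟨⟨hr1, hrC⟩, hlt⟩ :
      (1 ≤ r ∧ r ≤ C.card) ∧ orderStat C r < r * α / C.card := by
    simpa [S] using hr
  obtain ⟨i, rfl⟩ := Nat.exists_eq_add_of_le' hr1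
  exact (orderStat_succ_lt_iff (by omega)).1 hlt

theorem le_rStarChunk {α : ℝ} {m : ℕ} {D : Multiset ℝ} {k : ℕ} (hk1 : 1 ≤ k)
    (hkD : k ≤ D.card) (hlt : orderStat D k < ((k + m - D.card : ℕ) : ℝ) * α / m) :
    k ≤ rStarChunk α m D :=
  Finset.le_sup (f := id) (by simp [hk1, hkD, hlt])

theorem rBH_le_rStarChunk_add {α : ℝ} (hα : 0 ≤ α) {C D : Multiset ℝ} (hDC : D ≤ C) :
    rBH α C ≤ rStarChunk α C.card D + C.card - D.card := by
  set m := C.card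
  set t := (rBH α C : ℝ) * α / m with ht_def
  have hDm : D.card ≤ m := Multiset.card_le_card hDC
  have hr : rBH α C ≤ countBelow D t + (m - D.card) :=
    (rBH_le_countBelow α C).trans (countBelow_le_of_le hDC t)
  cases hk : countBelow D t with
  | zero => omega
  | succ i =>
    have hkD : i + 1 ≤ D.card := hk ▸ countBelow_le_card D t
    have hlt : orderStat D (i + 1) < t := (orderStat_succ_lt_iff hkD).2 (by omega)
    have ht : t ≤ ((i + 1 + m - D.card : ℕ) : ℝ) * α / m := by
      rw [ht_def]
      gcongr
      omega
    have := le_rStarChunk (α := α) (m := m) le_add_self hkD (hlt.trans_le ht)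
    omega

theorem global_rejections_selected_by_chunks_general
    (α : ℝ) (hα0 : 0 < α)
    (c : ℕ) (Ch : Fin c → Multiset ℝ)
    (C : Multiset ℝ) (hC : C = ∑ i, Ch i)
    (m : ℕ) (hm : m = C.card) :
    (∀ i : Fin c, ∀ p ∈ Ch i,
        p < (rBH α C : ℝ) * α / (m : ℝ) →
        p < ((rStarChunk α m (Ch i) + m - (Ch i).card : ℕ) : ℝ) * α / (m : ℝ)) ∧
    C.filter (fun p => p < (rBH α C : ℝ) * α / (m : ℝ)) ≤
      ∑ i : Fin c, (Ch i).filter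
        (fun p => p < ((rStarChunk α m (Ch i) + m - (Ch i).card : ℕ) : ℝ) * α / (m : ℝ)) := by
  have hthreshold : ∀ i, (rBH α C : ℝ) * α / m ≤
      ((rStarChunk α m (Ch i) + m - (Ch i).card : ℕ) : ℝ) * α / m := by
    intro i
    have hle : Ch i ≤ C :=
      hC ▸ Finset.single_le_sum (fun _ _ => zero_le) (Finset.mem_univ i)
    subst hm
    gcongr
    exact rBH_le_rStarChunk_add hα0.le hle
  refine ⟨fun i p _ hp => hp.trans_le (hthreshold i), ?_⟩
  calc C.filter (fun p => p < (rBH α C : ℝ) * α / m)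
      = ∑ i, (Ch i).filter (fun p => p < (rBH α C : ℝ) * α / m) := by
        rw [hC, Multiset.filter_finset_sum]
    _ ≤ _ := Finset.sum_le_sum fun i _ =>
        Multiset.monotone_filter_right _ fun _ hp => hp.trans_le (hthreshold i)

/-- Every globally BH-rejected p-value is selected by its chunk: every
`p ∈ Ch i` with `p < r_C·α/m` also satisfies `p < (r*_{C_i} + m − m_i)·α/m`; hence the
global BH rejection set is contained in the union over chunks of the chunk-selected sets. -/
theorem global_rejections_selected_by_chunks
    (α : ℝ) (hα0 : 0 < α) (hα1 : α < 1)
    (c : ℕ) (Ch : Fin c → Multiset ℝ)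
    (hvals : ∀ i, ∀ p ∈ Ch i, 0 ≤ p ∧ p ≤ 1)
    (C : Multiset ℝ) (hC : C = ∑ i, Ch i)
    (m : ℕ) (hm : m = C.card) :
    (∀ i : Fin c, ∀ p ∈ Ch i,
        p < (rBH α C : ℝ) * α / (m : ℝ) →
        p < ((rStarChunk α m (Ch i) + m - (Ch i).card : ℕ) : ℝ) * α / (m : ℝ)) ∧
    C.filter (fun p => p < (rBH α C : ℝ) * α / (m : ℝ)) ≤
      ∑ i : Fin c, (Ch i).filter
        (fun p => p < ((rStarChunk α m (Ch i) + m - (Ch i).card : ℕ) : ℝ) * α / (m : ℝ)) :=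
  global_rejections_selected_by_chunks_general α hα0 c Ch C hC m hm
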